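/- Under (A0), (B1), (B2), if f is a pointwise limit of a subsequence of f_n(x) = ℙ_x(τ_ϑ > n)/ℙ_e(τ_ϑ > n), then f is superharmonic for (X(t)) and satisfies 𝔼_x[ f(H_1) ; 𝒯_ϑ > 1 ] ≤ f(x) − 1 for all x ∈ E, where (H_n) is the ladder height chain with kernel P_H and 𝒯_ϑ its absorption time. Consequently, the renewal function V(x) = 𝔼_x(𝒯_ϑ) is finite on E and V(x) ≤ liminf_n f_n(x) for all x ∈ E. -/

import Mathlib

open scoped ENNReal Classical BigOperators
open Filter

noncomputable section

namespace RW

variable {G : Type*}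

/-- One-step transition operator `Pφ(x) = Σ_y p(x,y) φ(y)`. -/
def kapp (p : G → G → ℝ≥0∞) (φ : G → ℝ≥0∞) (x : G) : ℝ≥0∞ := ∑' y, p x y * φ y

/-- n-step transition kernel. -/
def kiter (p : G → G → ℝ≥0∞) : ℕ → G → G → ℝ≥0∞
  | 0 => fun x y => if x = y then 1 else 0
  | n + 1 => fun x y => ∑' z, p x z * kiter p n z y

/-- Green function `G(x,y) = Σ_t ℙ_x(X(t)=y)`. -/
def green (p : G → G → ℝ≥0∞) (x y : G) : ℝ≥0∞ := ∑' n, kiter p n x y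

/-- Green operator `Gφ(x) = Σ_y G(x,y) φ(y)`. -/
def greenApp (p : G → G → ℝ≥0∞) (φ : G → ℝ≥0∞) (x : G) : ℝ≥0∞ := ∑' y, green p x y * φ y

/-- Probability of first hitting `y` at time `n ≥ 1`. -/
def fhit (p : G → G → ℝ≥0∞) : ℕ → G → G → ℝ≥0∞
  | 0 => fun _ _ => 0
  | 1 => p
  | n + 2 => fun x y => ∑' z, if z = y then 0 else p x z * fhit p (n + 1) z y

/-- Hitting probability `Q(x,y) = ℙ_x(∃ t ≥ 1, X(t) = y)`. -/
def hitProb (p : G → G → ℝ≥0∞) (x y : G) : ℝ≥0∞ := ∑' n, fhit p n x y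

/-- Survival probability `ℙ_x(τ_ϑ > n)`. -/
def surv (p : G → G → ℝ≥0∞) (n : ℕ) (x : G) : ℝ≥0∞ := ∑' y, kiter p n x y

/-- Expected lifetime `𝔼_x(τ_ϑ) = Σ_n ℙ_x(τ_ϑ > n)`. -/
def gexp (p : G → G → ℝ≥0∞) (x : G) : ℝ≥0∞ := ∑' n, surv p n x

variable [Group G]

/-- Matrix coefficients `a_u(x,y)` of the operator `A_u = T_u P - P T_u`. -/
def acoef (p : G → G → ℝ≥0∞) (E : Set G) (u x y : G) : ℝ≥0∞ :=
  if y * u⁻¹ ∈ E then p (x * u) y - p x (y * u⁻¹) else p (x * u) y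

/-- The operator `A_u φ(x) = Σ_y a_u(x,y) φ(y)`. -/
def Aop (p : G → G → ℝ≥0∞) (E : Set G) (u : G) (φ : G → ℝ≥0∞) (x : G) : ℝ≥0∞ :=
  ∑' y, acoef p E u x y * φ y

/-- Ladder height transition kernel `p_H(x,y) = G A_x 𝟙_{y}(e)`. -/
def ladder (p : G → G → ℝ≥0∞) (E : Set G) (x y : G) : ℝ≥0∞ :=
  ∑' z, green p 1 z * acoef p E x z y

/-- The renewal function `V(x) = 𝔼_x(𝒯_ϑ)` of the ladder height process. -/
def V (p : G → G → ℝ≥0∞) (E : Set G) (x : G) : ℝ≥0∞ :=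
  ∑' n, surv (ladder p E) n x

end RW

end

/-!
On `E` the translation `T_u ψ = ψ (· * u)` and the transition operator `P` satisfy
`T_u P = P T_u + A_u` with `A_u ≥ 0`, by the monotonicity `p x y ≤ p (x u) (y u)`. Iterating, and
using that survival probabilities decrease in time, gives `f_n(x) ≥ 1 + ∑_{k<n} P^k A_x f_n (1)`;
Fatou's lemma turns this into `f(x) ≥ 1 + G A_x f (1) = 1 + P_H f (x)`, and `P f_n ≤ f_n` likewise
makes `f` superharmonic. For `g = liminf f_n` we have `g(1) = 1`, so superharmonicity and
irreducibility make `g` finite on `E`, and summing `1 + P_H g ≤ g` along the ladder chain bounds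
`V = ∑ₙ ℙ(𝒯_ϑ > n)` by `g`.
-/

namespace ENNReal

theorem tsum_liminf_le_liminf_tsum {β : Type*} (u : ℕ → β → ℝ≥0∞) :
    ∑' b, liminf (fun n => u n b) atTop ≤ liminf (fun n => ∑' b, u n b) atTop := by
  let _ : MeasurableSpace β := ⊤
  have hfatou := MeasureTheory.lintegral_liminf_le (μ := MeasureTheory.Measure.count)
    (f := u) (u := atTop) fun _ => measurable_from_top
  simpa only [MeasureTheory.lintegral_count' measurable_from_top] using hfatou

theorem tsum_liminf_le_liminf_sum_range (a : ℕ → ℕ → ℝ≥0∞) {ι : ℕ → ℕ}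
    (hι : Tendsto ι atTop atTop) :
    ∑' k, liminf (fun j => a j k) atTop
      ≤ liminf (fun j => ∑ k ∈ Finset.range (ι j), a j k) atTop := by
  let b : ℕ → ℕ → ℝ≥0∞ := fun j k => if k < ι j then a j k else 0
  have hb_liminf : ∀ k, liminf (fun j => b j k) atTop = liminf (fun j => a j k) atTop := fun k =>
    liminf_congr <| (hι.eventually_gt_atTop k).mono fun j hj => if_pos hj
  have hb_tsum : ∀ j, ∑' k, b j k = ∑ k ∈ Finset.range (ι j), a j k := fun j =>
    (tsum_eq_sum fun k hk => if_neg (by simpa using hk)).trans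
      (Finset.sum_congr rfl fun k hk => if_pos (by simpa using hk))
  simpa only [hb_liminf, hb_tsum] using tsum_liminf_le_liminf_tsum b

end ENNReal

namespace RW

section Kernel

variable {α : Type*}

theorem kapp_le_kapp {q : α → α → ℝ≥0∞} {ψ₁ ψ₂ : α → ℝ≥0∞} {x : α}
    (hψ : ∀ y, q x y ≠ 0 → ψ₁ y ≤ ψ₂ y) : kapp q ψ₁ x ≤ kapp q ψ₂ x := by
  refine ENNReal.tsum_le_tsum fun y => ?_
  by_cases hy : q x y = 0
  · simp [hy]
  · gcongr
    exact hψ y hy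

theorem kapp_congr {q : α → α → ℝ≥0∞} {ψ₁ ψ₂ : α → ℝ≥0∞} {x : α}
    (hψ : ∀ y, q x y ≠ 0 → ψ₁ y = ψ₂ y) : kapp q ψ₁ x = kapp q ψ₂ x :=
  le_antisymm (kapp_le_kapp fun y hy => (hψ y hy).le) (kapp_le_kapp fun y hy => (hψ y hy).ge)

theorem kapp_mono (q : α → α → ℝ≥0∞) : Monotone (kapp q) :=
  fun _ _ hψ _ => kapp_le_kapp fun y _ => hψ y

theorem kapp_add (q : α → α → ℝ≥0∞) (ψ₁ ψ₂ : α → ℝ≥0∞) (x : α) :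
    kapp q (fun y => ψ₁ y + ψ₂ y) x = kapp q ψ₁ x + kapp q ψ₂ x := by
  simp only [kapp, mul_add]
  exact ENNReal.tsum_add

theorem kapp_finset_sum {ι : Type*} (q : α → α → ℝ≥0∞) (s : Finset ι) (ψ : ι → α → ℝ≥0∞)
    (x : α) : kapp q (fun y => ∑ i ∈ s, ψ i y) x = ∑ i ∈ s, kapp q (ψ i) x := by
  simp only [kapp, Finset.mul_sum]
  exact Summable.tsum_finsetSum fun _ _ => ENNReal.summable

theorem kapp_mul_const (q : α → α → ℝ≥0∞) (ψ : α → ℝ≥0∞) (c : ℝ≥0∞) (x : α) :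
    kapp q (fun y => ψ y * c) x = kapp q ψ x * c := by
  simp only [kapp, ← mul_assoc]
  exact ENNReal.tsum_mul_right

theorem kapp_liminf_le (q : α → α → ℝ≥0∞) (u : ℕ → α → ℝ≥0∞) (x : α) :
    kapp q (fun y => liminf (fun n => u n y) atTop) x ≤ liminf (fun n => kapp q (u n) x) atTop :=
  calc kapp q (fun y => liminf (fun n => u n y) atTop) x
      ≤ ∑' y, liminf (fun n => q x y * u n y) atTop := ENNReal.tsum_le_tsum fun y => by
        have h := ENNReal.le_liminf_mul (f := atTop) (u := fun _ => q x y) (v := fun n => u n y)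
        rwa [liminf_const] at h
    _ ≤ _ := ENNReal.tsum_liminf_le_liminf_tsum _

theorem kapp_iterate (p : α → α → ℝ≥0∞) (n : ℕ) (ψ : α → ℝ≥0∞) (x : α) :
    (kapp p)^[n] ψ x = kapp (kiter p n) ψ x := by
  induction n generalizing x with
  | zero => simp [kapp, kiter]
  | succ n ih =>
    rw [Function.iterate_succ_apply']
    simp only [kapp] at ih ⊢
    simp_rw [ih, kiter, ← ENNReal.tsum_mul_left, ← ENNReal.tsum_mul_right, mul_assoc]
    exact ENNReal.tsum_comm

theorem greenApp_eq_tsum (p : α → α → ℝ≥0∞) (φ : α → ℝ≥0∞) (x : α) :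
    greenApp p φ x = ∑' n, kapp (kiter p n) φ x := by
  simp_rw [greenApp, green, kapp, ← ENNReal.tsum_mul_right]
  exact ENNReal.tsum_comm

theorem surv_zero (p : α → α → ℝ≥0∞) (x : α) : surv p 0 x = 1 := by
  simp [surv, kiter]

theorem surv_succ (p : α → α → ℝ≥0∞) (n : ℕ) (x : α) :
    surv p (n + 1) x = kapp p (surv p n) x := by
  simp_rw [kapp, surv, kiter, ← ENNReal.tsum_mul_left]
  exact ENNReal.tsum_comm

end Kernel

section Substochastic

variable {α : Type*} {p : α → α → ℝ≥0∞}

theorem surv_le_one (hsub : ∀ x, ∑' y, p x y ≤ 1) (n : ℕ) (x : α) : surv p n x ≤ 1 := by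
  induction n generalizing x with
  | zero => rw [surv_zero]
  | succ n ih =>
    calc surv p (n + 1) x = kapp p (surv p n) x := surv_succ p n x
      _ ≤ kapp p (fun _ => 1) x := kapp_mono p ih x
      _ ≤ 1 := by simpa [kapp] using hsub x

theorem surv_ne_top (hsub : ∀ x, ∑' y, p x y ≤ 1) (n : ℕ) (x : α) : surv p n x ≠ ⊤ :=
  ne_top_of_le_ne_top ENNReal.one_ne_top (surv_le_one hsub n x)

theorem surv_succ_le (hsub : ∀ x, ∑' y, p x y ≤ 1) (n : ℕ) : surv p (n + 1) ≤ surv p n := by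
  induction n with
  | zero => exact fun x => (surv_le_one hsub 1 x).trans_eq (surv_zero p x).symm
  | succ n ih =>
    intro x
    rw [surv_succ, surv_succ p n]
    exact kapp_mono p ih x

theorem surv_antitone (hsub : ∀ x, ∑' y, p x y ≤ 1) : Antitone (surv p) :=
  antitone_nat_of_succ_le (surv_succ_le hsub)

theorem kiter_mul_surv_le (m n : ℕ) (x y : α) :
    kiter p m x y * surv p n y ≤ surv p (m + n) x := by
  induction m generalizing x with
  | zero => by_cases hxy : x = y <;> simp [kiter, hxy]
  | succ m ih =>
    calc kiter p (m + 1) x y * surv p n y = ∑' z, p x z * (kiter p m z y * surv p n y) := by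
          simp_rw [kiter, ← ENNReal.tsum_mul_right, mul_assoc]
      _ ≤ kapp p (surv p (m + n)) x := ENNReal.tsum_le_tsum fun z => by gcongr; exact ih z
      _ = surv p (m + 1 + n) x := by rw [Nat.add_right_comm, surv_succ]

theorem surv_ne_zero_of_kiter_ne_zero (hsub : ∀ x, ∑' y, p x y ≤ 1) {m : ℕ} (hm : 0 < m)
    {x : α} (hx : kiter p m x x ≠ 0) (n : ℕ) : surv p n x ≠ 0 := by
  have hpow : ∀ j, kiter p m x x ^ j ≤ surv p (m * j) x := by
    intro j
    induction j with
    | zero => simp [surv_zero]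
    | succ j ih =>
      calc kiter p m x x ^ (j + 1) ≤ kiter p m x x * surv p (m * j) x := by
            rw [pow_succ']; gcongr
        _ ≤ surv p (m * (j + 1)) x := by
            rw [Nat.mul_succ, Nat.add_comm]; exact kiter_mul_surv_le m _ x x
  have hn : n ≤ m * n := Nat.le_mul_of_pos_left n hm
  exact ne_bot_of_le_ne_bot (pow_ne_zero n hx) ((hpow n).trans (surv_antitone hsub hn x))

end Substochastic

theorem fhit_le_kiter {α : Type*} (p : α → α → ℝ≥0∞) : ∀ n (x y : α), fhit p n x y ≤ kiter p n x y
  | 0, _, _ => by simp [fhit]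
  | 1, x, y => by simp [fhit, kiter]
  | n + 2, x, y => by
    refine ENNReal.tsum_le_tsum fun z => ?_
    split
    · exact zero_le
    · gcongr
      exact fhit_le_kiter p (n + 1) z y

theorem exists_kiter_ne_zero_of_hitProb_ne_zero {α : Type*} {p : α → α → ℝ≥0∞} {x y : α}
    (h : hitProb p x y ≠ 0) : ∃ m, 0 < m ∧ kiter p m x y ≠ 0 := by
  obtain ⟨m, hm⟩ : ∃ m, fhit p m x y ≠ 0 := by
    by_contra! hc
    exact h (ENNReal.tsum_eq_zero.2 hc)
  refine ⟨m, Nat.pos_of_ne_zero ?_, ne_bot_of_le_ne_bot hm (fhit_le_kiter p m x y)⟩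
  rintro rfl
  exact hm rfl

section Superharmonic

variable {α : Type*} {p : α → α → ℝ≥0∞} {E : Set α}

theorem kiter_mul_le_of_superharmonic (hp : ∀ x y, p x y ≠ 0 → y ∈ E) {h : α → ℝ≥0∞}
    (hh : ∀ z ∈ E, kapp p h z ≤ h z) (m : ℕ) {z : α} (hz : z ∈ E) (y : α) :
    kiter p m z y * h y ≤ h z := by
  induction m generalizing z with
  | zero => by_cases hzy : z = y <;> simp [kiter, hzy]
  | succ m ih =>
    calc kiter p (m + 1) z y * h y = kapp p (fun w => kiter p m w y * h y) z := by
          simp_rw [kapp, kiter, ← ENNReal.tsum_mul_right, mul_assoc]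
      _ ≤ kapp p h z := kapp_le_kapp fun w hw => ih (hp z w hw)
      _ ≤ h z := hh z hz

theorem ne_top_of_superharmonic (hp : ∀ x y, p x y ≠ 0 → y ∈ E) {h : α → ℝ≥0∞}
    (hh : ∀ z ∈ E, kapp p h z ≤ h z) {z y : α} (hz : z ∈ E) (hhz : h z ≠ ⊤)
    (hzy : hitProb p z y ≠ 0) : h y ≠ ⊤ := by
  obtain ⟨m, -, hm⟩ := exists_kiter_ne_zero_of_hitProb_ne_zero hzy
  intro hy
  have hbound := kiter_mul_le_of_superharmonic hp hh m hz y
  rw [hy, ENNReal.mul_top hm] at hbound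
  exact hhz (top_le_iff.1 hbound)

theorem gexp_le_of_one_add_kapp_le (hp : ∀ x y, p x y ≠ 0 → y ∈ E) {g : α → ℝ≥0∞}
    (hg : ∀ x ∈ E, 1 + kapp p g x ≤ g x) {x : α} (hx : x ∈ E) : gexp p x ≤ g x := by
  have hpartial : ∀ N, ∀ x ∈ E, ∑ n ∈ Finset.range N, surv p n x ≤ g x := by
    intro N
    induction N with
    | zero => simp
    | succ N ih =>
      intro x hx
      calc ∑ n ∈ Finset.range (N + 1), surv p n x
          = 1 + kapp p (fun y => ∑ n ∈ Finset.range N, surv p n y) x := by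
            rw [Finset.sum_range_succ', surv_zero, kapp_finset_sum, add_comm]
            simp only [surv_succ]
        _ ≤ 1 + kapp p g x := by
            gcongr
            exact kapp_le_kapp fun y hy => ih y (hp x y hy)
        _ ≤ g x := hg x hx
  rw [gexp, ENNReal.tsum_eq_iSup_nat]
  exact iSup_le fun N => hpartial N x hx

end Superharmonic

section Group

variable {G : Type*} [Group G] {p : G → G → ℝ≥0∞} {E : Set G}

theorem acoef_le (u z y : G) : acoef p E u z y ≤ p (z * u) y := by
  unfold acoef
  split_ifs
  · exact tsub_le_self
  · exact le_rfl

theorem Aop_mono (u : G) : Monotone (Aop p E u) :=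
  kapp_mono (acoef p E u)

theorem mem_of_ladder_ne_zero (hp : ∀ x y, p x y ≠ 0 → y ∈ E) {x y : G}
    (h : ladder p E x y ≠ 0) : y ∈ E := by
  obtain ⟨z, hz⟩ := not_forall.1 (mt ENNReal.tsum_eq_zero.2 h)
  exact hp _ _ (ne_bot_of_le_ne_bot (right_ne_zero_of_mul hz) (acoef_le x z y))

theorem kapp_ladder (h : G → ℝ≥0∞) (x : G) :
    kapp (ladder p E) h x = greenApp p (Aop p E x h) 1 := by
  simp_rw [kapp, ladder, greenApp, Aop, ← ENNReal.tsum_mul_right, ← ENNReal.tsum_mul_left,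
    mul_assoc]
  exact ENNReal.tsum_comm

section Translation

variable (hp : ∀ x y, p x y ≠ 0 → y ∈ E)
  (hmono : ∀ x ∈ E, ∀ y ∈ E, ∀ u ∈ E, p x y ≤ p (x * u) (y * u))
include hp hmono

theorem add_acoef {u z : G} (hu : u ∈ E) (hz : z ∈ E) (y : G) :
    p z (y * u⁻¹) + acoef p E u z y = p (z * u) y := by
  unfold acoef
  split_ifs with hy
  · refine add_tsub_cancel_of_le ?_
    simpa using hmono z hz (y * u⁻¹) hy u hu
  · rw [show p z (y * u⁻¹) = 0 from not_imp_comm.1 (hp _ _) hy, zero_add]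

theorem kapp_comp_mul_right_add_Aop {u z : G} (hu : u ∈ E) (hz : z ∈ E) (ψ : G → ℝ≥0∞) :
    kapp p (fun y => ψ (y * u)) z + Aop p E u ψ z = kapp p ψ (z * u) := by
  have hshift : ∑' y, p z y * ψ (y * u) = ∑' y, p z (y * u⁻¹) * ψ y := by
    rw [← (Equiv.mulRight u).tsum_eq fun y => p z (y * u⁻¹) * ψ y]
    simp
  rw [kapp, kapp, Aop, hshift, ← ENNReal.tsum_add]
  exact tsum_congr fun y => by rw [← add_mul, add_acoef hp hmono hu hz]

theorem surv_add_sum_Aop_le_surv_mul (hsub : ∀ x, ∑' y, p x y ≤ 1) {u : G} (hu : u ∈ E) (n : ℕ)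
    {z : G} (hz : z ∈ E) :
    surv p n z + ∑ k ∈ Finset.range n, (kapp p)^[k] (Aop p E u (surv p n)) z
      ≤ surv p n (z * u) := by
  -- Keeping the same `n` throughout works because `surv p (n + 1) ≤ surv p n` and `A_u ≥ 0`.
  induction n generalizing z with
  | zero => simp [surv_zero]
  | succ n ih =>
    have hAop_mono : ∀ k, (kapp p)^[k] (Aop p E u (surv p (n + 1)))
        ≤ (kapp p)^[k] (Aop p E u (surv p n)) :=
      fun k => (kapp_mono p).iterate k (Aop_mono u (surv_succ_le hsub n))
    calc surv p (n + 1) z + ∑ k ∈ Finset.range (n + 1), (kapp p)^[k] (Aop p E u (surv p (n + 1))) z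
        ≤ surv p (n + 1) z + ∑ k ∈ Finset.range (n + 1), (kapp p)^[k] (Aop p E u (surv p n)) z := by
          gcongr with k
          exact hAop_mono k z
      _ = kapp p (fun y => surv p n y
              + ∑ k ∈ Finset.range n, (kapp p)^[k] (Aop p E u (surv p n)) y) z
            + Aop p E u (surv p n) z := by
          simp only [Finset.sum_range_succ', kapp_add, kapp_finset_sum, surv_succ,
            Function.iterate_succ_apply', Function.iterate_zero_apply, add_assoc]
      _ ≤ kapp p (fun y => surv p n (y * u)) z + Aop p E u (surv p n) z := by
          gcongr
          exact kapp_le_kapp fun y hy => ih (hp z y hy)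
      _ = surv p (n + 1) (z * u) := by rw [kapp_comp_mul_right_add_Aop hp hmono hu hz, surv_succ]

end Translation

noncomputable def survRatio (p : G → G → ℝ≥0∞) (n : ℕ) (x : G) : ℝ≥0∞ := surv p n x / surv p n 1

theorem survRatio_eq_mul_inv (p : G → G → ℝ≥0∞) (n : ℕ) :
    survRatio p n = fun y => surv p n y * (surv p n 1)⁻¹ :=
  funext fun _ => div_eq_mul_inv _ _

theorem kapp_survRatio_le (hsub : ∀ x, ∑' y, p x y ≤ 1) (n : ℕ) (x : G) :
    kapp p (survRatio p n) x ≤ survRatio p n x := by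
  simp only [survRatio_eq_mul_inv, kapp_mul_const, ← surv_succ]
  gcongr
  exact surv_succ_le hsub n x

theorem kapp_liminf_survRatio_le (hsub : ∀ x, ∑' y, p x y ≤ 1) (ι : ℕ → ℕ) (x : G) :
    kapp p (fun y => liminf (fun j => survRatio p (ι j) y) atTop) x
      ≤ liminf (fun j => survRatio p (ι j) x) atTop :=
  (kapp_liminf_le p _ x).trans <| liminf_le_liminf <|
    Eventually.of_forall fun j => kapp_survRatio_le hsub (ι j) x

section Ladder

variable (hp : ∀ x y, p x y ≠ 0 → y ∈ E) (hsub : ∀ x, ∑' y, p x y ≤ 1)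
  (hmono : ∀ x ∈ E, ∀ y ∈ E, ∀ u ∈ E, p x y ≤ p (x * u) (y * u)) (hone : (1 : G) ∈ E)
include hp hsub hmono hone

theorem one_add_sum_Aop_survRatio_le {x : G} (hx : x ∈ E) {n : ℕ} (hn : surv p n 1 ≠ 0) :
    1 + ∑ k ∈ Finset.range n, kapp (kiter p k) (Aop p E x (survRatio p n)) 1
      ≤ survRatio p n x := by
  set c := (surv p n 1)⁻¹
  have hscale : ∀ k, kapp (kiter p k) (Aop p E x (survRatio p n)) 1
      = (kapp p)^[k] (Aop p E x (surv p n)) 1 * c := fun k => by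
    rw [kapp_iterate, ← kapp_mul_const, survRatio_eq_mul_inv]
    exact congrArg (kapp _ · 1) (funext fun z => kapp_mul_const _ _ _ z)
  have hkey := surv_add_sum_Aop_le_surv_mul hp hmono hsub hx n hone
  rw [one_mul] at hkey
  calc 1 + ∑ k ∈ Finset.range n, kapp (kiter p k) (Aop p E x (survRatio p n)) 1
      = (surv p n 1 + ∑ k ∈ Finset.range n, (kapp p)^[k] (Aop p E x (surv p n)) 1) * c := by
        rw [add_mul, Finset.sum_mul, ENNReal.mul_inv_cancel hn (surv_ne_top hsub n 1)]
        simp only [hscale]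
    _ ≤ surv p n x * c := by gcongr
    _ = survRatio p n x := (div_eq_mul_inv _ _).symm

theorem one_add_kapp_ladder_liminf_survRatio_le (hpos : ∀ n, surv p n 1 ≠ 0) {ι : ℕ → ℕ}
    (hι : Tendsto ι atTop atTop) {x : G} (hx : x ∈ E) :
    1 + kapp (ladder p E) (fun y => liminf (fun j => survRatio p (ι j) y) atTop) x
      ≤ liminf (fun j => survRatio p (ι j) x) atTop := by
  set F := fun y => liminf (fun j => survRatio p (ι j) y) atTop
  set a : ℕ → ℕ → ℝ≥0∞ := fun j k => kapp (kiter p k) (Aop p E x (survRatio p (ι j))) 1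
  -- Fatou for `Aop p E x = kapp (acoef p E x)`, then for `kapp (kiter p k)`.
  have hterm : ∀ k, kapp (kiter p k) (Aop p E x F) 1 ≤ liminf (fun j => a j k) atTop := fun k =>
    (kapp_mono _ (kapp_liminf_le (acoef p E x) _) 1).trans (kapp_liminf_le _ _ 1)
  calc 1 + kapp (ladder p E) F x = 1 + ∑' k, kapp (kiter p k) (Aop p E x F) 1 := by
        rw [kapp_ladder, greenApp_eq_tsum]
    _ ≤ 1 + ∑' k, liminf (fun j => a j k) atTop := by
        gcongr with k
        exact hterm k
    _ ≤ 1 + liminf (fun j => ∑ k ∈ Finset.range (ι j), a j k) atTop := by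
        gcongr
        exact ENNReal.tsum_liminf_le_liminf_sum_range a hι
    _ = liminf (fun j => 1 + ∑ k ∈ Finset.range (ι j), a j k) atTop :=
        (liminf_const_add _ _ _ (by isBoundedDefault) (by isBoundedDefault)).symm
    _ ≤ liminf (fun j => survRatio p (ι j) x) atTop := liminf_le_liminf <| Eventually.of_forall
        fun j => one_add_sum_Aop_survRatio_le hp hsub hmono hone hx (hpos (ι j))

end Ladder

end Group

end RW

open RW

theorem statement11_general {G : Type*} [Group G]
    (p : G → G → ℝ≥0∞) (E : Set G)
    (hsupp : ∀ x y, p x y ≠ 0 → x ∈ E ∧ y ∈ E)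
    (hsub : ∀ x, (∑' y, p x y) ≤ 1)
    (hirr : ∀ x ∈ E, ∀ y ∈ E, 0 < hitProb p x y)
    (hone : (1 : G) ∈ E)
    (hmono : ∀ x ∈ E, ∀ y ∈ E, ∀ u ∈ E, p x y ≤ p (x * u) (y * u))
    (f : G → ℝ≥0∞) (φ : ℕ → ℕ) (hφ : StrictMono φ)
    (hlim : ∀ x ∈ E,
      Tendsto (fun k => surv p (φ k) x / surv p (φ k) 1) atTop (nhds (f x))) :
    (∀ x ∈ E, kapp p f x ≤ f x) ∧
    (∀ x ∈ E, kapp (ladder p E) f x + 1 ≤ f x) ∧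
    (∀ x ∈ E, V p E x < ⊤) ∧
    (∀ x ∈ E, V p E x ≤ Filter.liminf (fun n => surv p n x / surv p n 1) atTop) := by
  have hp : ∀ x y, p x y ≠ 0 → y ∈ E := fun x y h => (hsupp x y h).2
  have hpos : ∀ n, surv p n 1 ≠ 0 := by
    obtain ⟨m, hm, hm1⟩ := exists_kiter_ne_zero_of_hitProb_ne_zero (hirr 1 hone 1 hone).ne'
    exact surv_ne_zero_of_kiter_ne_zero hsub hm hm1
  have hf : ∀ y ∈ E, f y = liminf (fun j => survRatio p (φ j) y) atTop :=
    fun y hy => (hlim y hy).liminf_eq.symm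
  set g : G → ℝ≥0∞ := fun y => liminf (fun n => survRatio p n y) atTop
  have hg_super : ∀ x ∈ E, kapp p g x ≤ g x := fun x _ => kapp_liminf_survRatio_le hsub id x
  have hg_ladder : ∀ x ∈ E, 1 + kapp (ladder p E) g x ≤ g x := fun x hx =>
    one_add_kapp_ladder_liminf_survRatio_le hp hsub hmono hone hpos tendsto_id hx
  have hg_one : g 1 = 1 := by
    simp only [g, survRatio, ENNReal.div_self (hpos _) (surv_ne_top hsub _ 1), liminf_const]
  have hV_le : ∀ x ∈ E, V p E x ≤ g x := fun x hx =>
    gexp_le_of_one_add_kapp_le (fun _ _ => mem_of_ladder_ne_zero hp) hg_ladder hx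
  refine ⟨fun x hx => ?_, fun x hx => ?_, fun x hx => ?_, hV_le⟩
  · rw [kapp_congr fun y hy => hf y (hp x y hy), hf x hx]
    exact kapp_liminf_survRatio_le hsub φ x
  · rw [kapp_congr fun y hy => hf y (mem_of_ladder_ne_zero hp hy), hf x hx, add_comm]
    exact one_add_kapp_ladder_liminf_survRatio_le hp hsub hmono hone hpos hφ.tendsto_atTop hx
  · have hg_fin := ne_top_of_superharmonic hp hg_super hone (by simp [hg_one])
      (hirr 1 hone x hx).ne'
    exact (hV_le x hx).trans_lt hg_fin.lt_top

theorem statement11 {G : Type*} [Group G] [Countable G]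
    (p : G → G → ℝ≥0∞) (E : Set G)
    (hsupp : ∀ x y, p x y ≠ 0 → x ∈ E ∧ y ∈ E)
    (hsub : ∀ x, (∑' y, p x y) ≤ 1)
    (hirr : ∀ x ∈ E, ∀ y ∈ E, 0 < hitProb p x y)
    (htrans : ∀ x ∈ E, green p x x < ⊤)
    (hone : (1 : G) ∈ E)
    (hmul : ∀ x ∈ E, ∀ y ∈ E, x * y ∈ E)
    (hmono : ∀ x ∈ E, ∀ y ∈ E, ∀ u ∈ E, p x y ≤ p (x * u) (y * u))
    (f : G → ℝ≥0∞) (φ : ℕ → ℕ) (hφ : StrictMono φ)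
    (hlim : ∀ x ∈ E,
      Tendsto (fun k => surv p (φ k) x / surv p (φ k) 1) atTop (nhds (f x))) :
    (∀ x ∈ E, kapp p f x ≤ f x) ∧
    (∀ x ∈ E, kapp (ladder p E) f x + 1 ≤ f x) ∧
    (∀ x ∈ E, V p E x < ⊤) ∧
    (∀ x ∈ E, V p E x ≤ Filter.liminf (fun n => surv p n x / surv p n 1) atTop) :=
  statement11_general p E hsupp hsub hirr hone hmono f φ hφ hlim
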